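/- arXiv:1702.02085 — 4 statements merged into one kernel-verified Lean document; each statement's English description precedes it below -/
import Mathlib

section
/- Let Z be any n×n complex matrix with singular values r_1,...,r_n, and let U be any n×n unitary matrix. Then ∏_{k=1}^n |1-r_k|/(1+r_k) · |det(I - UZ)|² ≤ |det(I - Z*Z)|. -/
/-!
Diagonalise `ZᴴZ = W diag(r²) Wᴴ` with `W` unitary. Then `det(I - ZᴴZ) = ∏ (1 - r_k²)`.
On the other side `det(I - UZ) = det(I - C)` for `C = WᴴUZW`, and `CᴴC = diag(r²)` says that the
`k`-th column of `C` has length `r_k`; so the `k`-th column of `I - C` has length at most `1 + r_k`,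
and Hadamard's inequality gives `|det(I - UZ)| ≤ ∏ (1 + r_k)`. Finally
`|1 - r|/(1 + r) · (1 + r)² = |1 - r²|` for `r ≥ 0`.
-/

open Matrix

theorem OrthonormalBasis.norm_det_le_prod_norm {𝕜 E ι : Type*} [RCLike 𝕜] [NormedAddCommGroup E]
    [InnerProductSpace 𝕜 E] [Fintype ι] [LinearOrder ι] [LocallyFiniteOrderBot ι]
    (b : OrthonormalBasis ι 𝕜 E) (v : ι → E) : ‖b.toBasis.det v‖ ≤ ∏ i, ‖v i‖ := by
  classical
  have : FiniteDimensional 𝕜 E := b.toBasis.finiteDimensional_of_finite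
  have h : Module.finrank 𝕜 E = Fintype.card ι := Module.finrank_eq_card_basis b.toBasis
  set g := InnerProductSpace.gramSchmidtOrthonormalBasis h v
  have hdet : b.toBasis.det v = b.toBasis.det g * g.toBasis.det v := by
    rw [Module.Basis.det_apply, Module.Basis.det_apply, Module.Basis.det_apply, ← det_mul,
      ← g.coe_toBasis, Module.Basis.toMatrix_mul_toMatrix]
  rw [hdet, norm_mul, b.det_to_matrix_orthonormalBasis g, one_mul,
    InnerProductSpace.gramSchmidtOrthonormalBasis_det, norm_prod]
  gcongr with i
  calc ‖inner 𝕜 (g i) (v i)‖ ≤ ‖g i‖ * ‖v i‖ := norm_inner_le_norm _ _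
    _ = ‖v i‖ := by rw [g.orthonormal.1 i, one_mul]

namespace Matrix

variable {𝕜 m n : Type*} [RCLike 𝕜]

theorem norm_toLp_col_sq [Fintype m] (B : Matrix m n 𝕜) (j : n) :
    ((‖WithLp.toLp 2 (B.col j)‖ ^ 2 : ℝ) : 𝕜) = (Bᴴ * B : Matrix n n 𝕜) j j := by
  rw [EuclideanSpace.norm_eq, Real.sq_sqrt (by positivity), mul_apply]
  push_cast
  simp [RCLike.conj_mul]

variable [Fintype n]

theorem norm_det_le_prod_norm_col [LinearOrder n] [LocallyFiniteOrderBot n] (A : Matrix n n 𝕜) :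
    ‖A.det‖ ≤ ∏ j, ‖(WithLp.toLp 2 (A.col j) : EuclideanSpace 𝕜 n)‖ := by
  have := (EuclideanSpace.basisFun n 𝕜).norm_det_le_prod_norm (fun j => WithLp.toLp 2 (A.col j))
  rwa [Module.Basis.det_apply] at this

theorem norm_toLp_col_one_sub_le [DecidableEq n] (C : Matrix n n 𝕜) (j : n) :
    ‖WithLp.toLp 2 ((1 - C).col j)‖ ≤ 1 + ‖WithLp.toLp 2 (C.col j)‖ := by
  have : WithLp.toLp 2 ((1 - C).col j) = EuclideanSpace.single j 1 - WithLp.toLp 2 (C.col j) := by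
    ext i
    simp [one_apply, eq_comm]
  rw [this]
  exact (norm_sub_le _ _).trans_eq (by rw [PiLp.norm_single, norm_one])

theorem IsHermitian.det_one_sub [DecidableEq n] {A : Matrix n n 𝕜} (hA : A.IsHermitian) :
    (1 - A).det = ∏ i, (1 - (hA.eigenvalues i : 𝕜)) := by
  rw [← map_one (scalar n), ← eval_charpoly, hA.charpoly_eq, Polynomial.eval_prod]
  simp

theorem norm_det_one_sub_unitary_mul_le [LinearOrder n] [LocallyFiniteOrderBot n]
    (Z U : Matrix n n 𝕜) (hU : U ∈ unitaryGroup n 𝕜) :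
    ‖(1 - U * Z).det‖ ≤ ∏ k, (1 + √((isHermitian_conjTranspose_mul_self Z).eigenvalues k)) := by
  set hZ := isHermitian_conjTranspose_mul_self Z
  set W : Matrix n n 𝕜 := ↑hZ.eigenvectorUnitary
  set C := star W * U * Z * W
  have hdet : (1 - U * Z).det = (1 - C).det := by
    have hUZ : U * Z = U * Z * W * star W := by
      rw [mul_assoc _ W, Unitary.mul_star_self_of_mem hZ.eigenvectorUnitary.2, mul_one]
    rw [hUZ, det_one_sub_mul_comm]
    simp only [C, mul_assoc]
  have hgram : Cᴴ * C = diagonal (RCLike.ofReal ∘ hZ.eigenvalues) := by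
    have hW : W * Wᴴ = 1 := Unitary.mul_star_self_of_mem hZ.eigenvectorUnitary.2
    have hU' : Uᴴ * U = 1 := Unitary.star_mul_self_of_mem hU
    calc Cᴴ * C = Wᴴ * Zᴴ * (Uᴴ * (W * Wᴴ) * U) * Z * W := by
          simp only [C, conjTranspose_mul, star_eq_conjTranspose, conjTranspose_conjTranspose,
            mul_assoc]
      _ = star W * (Zᴴ * Z) * W := by
          rw [hW, mul_one, hU', mul_one, star_eq_conjTranspose, mul_assoc _ Zᴴ]
      _ = diagonal (RCLike.ofReal ∘ hZ.eigenvalues) := by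
          rw [← Unitary.conjStarAlgAut_star_apply (S := 𝕜),
            hZ.conjStarAlgAut_star_eigenvectorUnitary]
  have hcol : ∀ k, ‖(WithLp.toLp 2 (C.col k) : EuclideanSpace 𝕜 n)‖ = √(hZ.eigenvalues k) := by
    intro k
    have h := norm_toLp_col_sq C k
    rw [hgram, diagonal_apply_eq, Function.comp_apply, RCLike.ofReal_inj] at h
    rw [← h, Real.sqrt_sq (norm_nonneg _)]
  calc ‖(1 - U * Z).det‖ = ‖(1 - C).det‖ := by rw [hdet]
    _ ≤ ∏ k, ‖(WithLp.toLp 2 ((1 - C).col k) : EuclideanSpace 𝕜 n)‖ := norm_det_le_prod_norm_col _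
    _ ≤ ∏ k, (1 + √(hZ.eigenvalues k)) := by
      gcongr with k
      exact (norm_toLp_col_one_sub_le C k).trans_eq (by rw [hcol])

end Matrix

open Finset in
/-- For an arbitrary complex matrix `Z` with singular values `r k` and any unitary `U`,
`∏ |1 - r k|/(1 + r k) · |det(I - UZ)|² ≤ |det(I - ZᴴZ)|`. -/
theorem harnack_lower_general (n : ℕ) (Z : Matrix (Fin n) (Fin n) ℂ)
    (r : Fin n → ℝ)
    (hr : ∀ k, r k = Real.sqrt ((Matrix.isHermitian_conjTranspose_mul_self Z).eigenvalues k))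
    (U : Matrix (Fin n) (Fin n) ℂ) (hU : U ∈ Matrix.unitaryGroup (Fin n) ℂ) :
    (∏ k, |1 - r k| / (1 + r k)) * ‖(1 - U * Z).det‖ ^ 2
      ≤ ‖(1 - Zᴴ * Z).det‖ := by
  have hZ := isHermitian_conjTranspose_mul_self Z
  have hr0 : ∀ k, 0 ≤ r k := fun k => hr k ▸ Real.sqrt_nonneg _
  have hsq : ∀ k, hZ.eigenvalues k = r k ^ 2 := fun k => by
    rw [hr k, Real.sq_sqrt (eigenvalues_conjTranspose_mul_self_nonneg Z k)]
  have hfactor : ∀ k, |1 - r k ^ 2| = |1 - r k| / (1 + r k) * (1 + r k) ^ 2 := fun k => by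
    have : 0 < 1 + r k := by linarith [hr0 k]
    rw [show 1 - r k ^ 2 = (1 - r k) * (1 + r k) by ring, abs_mul, abs_of_pos this]
    field_simp
  have hdet : ‖(1 - Zᴴ * Z).det‖ = ∏ k, |1 - r k| / (1 + r k) * (1 + r k) ^ 2 := by
    rw [hZ.det_one_sub, norm_prod]
    refine prod_congr rfl fun k _ => ?_
    rw [← hfactor, ← hsq, ← RCLike.ofReal_one, ← RCLike.ofReal_sub, RCLike.norm_ofReal]
  have hbound : ‖(1 - U * Z).det‖ ≤ ∏ k, (1 + r k) := by
    simpa only [← hr] using norm_det_one_sub_unitary_mul_le Z U hU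
  calc (∏ k, |1 - r k| / (1 + r k)) * ‖(1 - U * Z).det‖ ^ 2
      ≤ (∏ k, |1 - r k| / (1 + r k)) * (∏ k, (1 + r k)) ^ 2 := by
        have : ∀ k, 0 ≤ 1 + r k := fun k => by linarith [hr0 k]
        gcongr
        exact prod_nonneg fun k _ => div_nonneg (abs_nonneg _) (this k)
    _ = ‖(1 - Zᴴ * Z).det‖ := by rw [hdet, ← prod_pow, ← prod_mul_distrib]
end

section
/- Let x and y be vectors with all entries in (0,1), x log-majorized by y, and y not a permutation of x. Then ∏_{k=1}^n (1 - x_k) > ∏_{k=1}^n (1 - y_k). -/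
/-!
Sort `u = x ∘ σ` and `v = y ∘ τ` decreasingly. The function `f t = -log (1 - exp t)` is convex on
`(-∞, 0)` with `f' (log u) = u / (1 - u)`, so its tangent lines give
`log (1 - u k) ≥ log (1 - v k) + c k * log (v k / u k)` with `c k = u k / (1 - u k)`, strictly
where `u k ≠ v k`. The weights `c k` are nonnegative and decreasing, and log-majorization says
exactly that the partial sums of `log (v k / u k)` are nonnegative, so by Abel summation
`∑ c k * log (v k / u k) ≥ 0`. Summing the tangent inequalities gives
`∑ log (1 - v k) < ∑ log (1 - u k)`.
-/

open BigOperators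

/-- `x` is log-majorized by `y`. -/
def IsLogMaj {n : ℕ} (x y : Fin n → ℝ) : Prop :=
  ∃ σ τ : Equiv.Perm (Fin n), Antitone (x ∘ σ) ∧ Antitone (y ∘ τ) ∧
    (∀ l : ℕ, ∏ k ∈ Finset.univ.filter (fun k : Fin n => (k : ℕ) < l), x (σ k)
        ≤ ∏ k ∈ Finset.univ.filter (fun k : Fin n => (k : ℕ) < l), y (τ k)) ∧
    ∏ k, x k = ∏ k, y k

open Finset Function

theorem Fin.extend_val_apply_of_le {α : Type*} {n : ℕ} (f : Fin n → α) (e : ℕ → α) {i : ℕ}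
    (hi : n ≤ i) : extend Fin.val f e i = e i :=
  extend_apply' _ _ _ fun ⟨k, hk⟩ => (hk ▸ k.isLt).not_ge hi

theorem Fin.sum_filter_lt_eq_sum_range_extend {n : ℕ} {M : Type*} [AddCommMonoid M]
    (d : Fin n → M) (l : ℕ) :
    ∑ k ∈ univ.filter (fun k : Fin n => (k : ℕ) < l), d k =
      ∑ i ∈ range l, extend Fin.val d 0 i := by
  calc ∑ k ∈ univ.filter (fun k : Fin n => (k : ℕ) < l), d k
      = ∑ k : Fin n, if (k : ℕ) < l then extend Fin.val d 0 k else 0 := by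
        rw [sum_filter]; simp only [Fin.val_injective.extend_apply]
    _ = ∑ i ∈ (range n).filter (· < l), extend Fin.val d 0 i := by
        rw [Fin.sum_univ_eq_sum_range (fun i => if i < l then extend Fin.val d 0 i else 0),
          sum_filter]
    _ = ∑ i ∈ (range l).filter (· < n), extend Fin.val d 0 i := by
        congr 1; ext; simp only [mem_filter, mem_range]; omega
    _ = ∑ i ∈ range l, extend Fin.val d 0 i := sum_filter_of_ne fun i _ hi =>
        not_le.1 fun hni => hi (Fin.extend_val_apply_of_le d 0 hni)

section Abel

variable {R : Type*} [Ring R] [PartialOrder R] [IsOrderedRing R]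

theorem sum_range_mul_nonneg_of_antitone {c d : ℕ → R} (n : ℕ) (hc : Antitone c)
    (hc0 : 0 ≤ c) (hd : ∀ l, 0 ≤ ∑ i ∈ range l, d i) : 0 ≤ ∑ i ∈ range n, c i * d i := by
  have h := sum_range_by_parts c d n
  simp only [smul_eq_mul] at h
  rw [h, sub_nonneg]
  exact (sum_nonpos fun i _ => mul_nonpos_of_nonpos_of_nonneg
    (sub_nonpos.2 (hc (Nat.le_succ i))) (hd _)).trans (mul_nonneg (hc0 _) (hd n))

theorem Fin.sum_mul_nonneg_of_antitone {n : ℕ} {c d : Fin n → R} (hc : Antitone c)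
    (hc0 : 0 ≤ c) (hd : ∀ l : ℕ, 0 ≤ ∑ k ∈ univ.filter (fun k : Fin n => (k : ℕ) < l), d k) :
    0 ≤ ∑ k, c k * d k := by
  have hval : ∀ (f : Fin n → R) (k : Fin n), extend Fin.val f 0 k = f k :=
    fun f => Fin.val_injective.extend_apply f 0
  have hC0 : 0 ≤ extend Fin.val c 0 := fun i => by
    rcases lt_or_ge i n with hi | hi
    · exact hval c ⟨i, hi⟩ ▸ hc0 _
    · exact (Fin.extend_val_apply_of_le c 0 hi).ge
  have hC : Antitone (extend Fin.val c 0) := fun i j hij => by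
    rcases lt_or_ge j n with hj | hj
    · exact (hval c ⟨j, hj⟩).trans_le
        ((hc (Fin.mk_le_mk.2 hij)).trans (hval c ⟨i, hij.trans_lt hj⟩).ge)
    · exact Fin.extend_val_apply_of_le c 0 hj ▸ hC0 i
  have := sum_range_mul_nonneg_of_antitone n hC hC0 fun l =>
    Fin.sum_filter_lt_eq_sum_range_extend d l ▸ hd l
  rwa [← Fin.sum_univ_eq_sum_range, Fintype.sum_congr _ _ fun k => by rw [hval, hval]] at this

end Abel

open Real

theorem log_one_sub_add_mul_log_div_lt {u v : ℝ} (hu0 : 0 < u) (hu1 : u < 1) (hv0 : 0 < v)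
    (hv1 : v < 1) (huv : u ≠ v) :
    log (1 - v) + u / (1 - u) * log (v / u) < log (1 - u) := by
  have hu1' : 0 < 1 - u := sub_pos.2 hu1
  have hv1' : 0 < 1 - v := sub_pos.2 hv1
  have h₁ : log (v / u) ≤ v / u - 1 := log_le_sub_one_of_pos (div_pos hv0 hu0)
  have h₂ : log ((1 - v) / (1 - u)) < (1 - v) / (1 - u) - 1 :=
    log_lt_sub_one_of_pos (div_pos hv1' hu1') fun h =>
      huv (by linarith [(div_eq_one_iff_eq hu1'.ne').1 h])
  rw [log_div hv1'.ne' hu1'.ne'] at h₂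
  have h₃ : u / (1 - u) * log (v / u) ≤ u / (1 - u) * (v / u - 1) :=
    mul_le_mul_of_nonneg_left h₁ (div_pos hu0 hu1').le
  have h₄ : u / (1 - u) * (v / u - 1) + ((1 - v) / (1 - u) - 1) = 0 := by
    field_simp; ring
  linarith

theorem log_one_sub_add_mul_log_div_le {u v : ℝ} (hu0 : 0 < u) (hu1 : u < 1) (hv0 : 0 < v)
    (hv1 : v < 1) : log (1 - v) + u / (1 - u) * log (v / u) ≤ log (1 - u) := by
  rcases eq_or_ne u v with rfl | huv
  · simp [div_self hu0.ne']
  · exact (log_one_sub_add_mul_log_div_lt hu0 hu1 hv0 hv1 huv).le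

theorem prod_one_sub_lt_of_antitone_of_prod_filter_le {n : ℕ} {u v : Fin n → ℝ}
    (hu0 : ∀ k, 0 < u k) (hu1 : ∀ k, u k < 1) (hv0 : ∀ k, 0 < v k) (hv1 : ∀ k, v k < 1)
    (hu : Antitone u)
    (hpart : ∀ l : ℕ, ∏ k ∈ univ.filter (fun k : Fin n => (k : ℕ) < l), u k
        ≤ ∏ k ∈ univ.filter (fun k : Fin n => (k : ℕ) < l), v k)
    (hne : u ≠ v) : ∏ k, (1 - v k) < ∏ k, (1 - u k) := by
  have h1u : ∀ k, 0 < 1 - u k := fun k => sub_pos.2 (hu1 k)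
  have h1v : ∀ k, 0 < 1 - v k := fun k => sub_pos.2 (hv1 k)
  set c : Fin n → ℝ := fun k => u k / (1 - u k)
  set d : Fin n → ℝ := fun k => log (v k / u k)
  have hc : Antitone c := fun i j hij =>
    div_le_div₀ (hu0 i).le (hu hij) (h1u i) (sub_le_sub_left (hu hij) 1)
  have hd (l : ℕ) : 0 ≤ ∑ k ∈ univ.filter (fun k : Fin n => (k : ℕ) < l), d k := by
    rw [← log_prod fun k _ => (div_pos (hv0 k) (hu0 k)).ne', prod_div_distrib]
    exact log_nonneg ((one_le_div (prod_pos fun k _ => hu0 k)).2 (hpart l))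
  have habel := Fin.sum_mul_nonneg_of_antitone hc (fun k => (div_pos (hu0 k) (h1u k)).le) hd
  obtain ⟨j, hj⟩ := Function.ne_iff.1 hne
  rw [← log_lt_log_iff (prod_pos fun k _ => h1v k) (prod_pos fun k _ => h1u k),
    log_prod fun k _ => (h1v k).ne', log_prod fun k _ => (h1u k).ne']
  calc ∑ k, log (1 - v k) ≤ ∑ k, (log (1 - v k) + c k * d k) := by
        rw [sum_add_distrib]; linarith
    _ < ∑ k, log (1 - u k) := sum_lt_sum
        (fun k _ => log_one_sub_add_mul_log_div_le (hu0 k) (hu1 k) (hv0 k) (hv1 k))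
        ⟨j, mem_univ j, log_one_sub_add_mul_log_div_lt (hu0 j) (hu1 j) (hv0 j) (hv1 j) hj⟩

/-- If the vectors with entries in `(0,1)` satisfy `x ≺_log y` and `y` is not a
permutation of `x`, then `∏ (1 - x k) > ∏ (1 - y k)`. -/
theorem prod_one_sub_gt_of_logMaj {n : ℕ} (x y : Fin n → ℝ)
    (hx0 : ∀ k, 0 < x k) (hx1 : ∀ k, x k < 1)
    (hy0 : ∀ k, 0 < y k) (hy1 : ∀ k, y k < 1)
    (hmaj : IsLogMaj x y)
    (hne : Finset.univ.val.map x ≠ Finset.univ.val.map y) :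
    ∏ k, (1 - y k) < ∏ k, (1 - x k) := by
  obtain ⟨σ, τ, hσ, -, hpart, -⟩ := hmaj
  rw [← Equiv.prod_comp σ fun k => 1 - x k, ← Equiv.prod_comp τ fun k => 1 - y k]
  refine prod_one_sub_lt_of_antitone_of_prod_filter_le (fun k => hx0 _) (fun k => hx1 _)
    (fun k => hy0 _) (fun k => hy1 _) hσ hpart fun h => hne ?_
  have hperm (f : Fin n → ℝ) (e : Equiv.Perm (Fin n)) :
      univ.val.map (f ∘ e) = univ.val.map f := by
    rw [← Multiset.map_map, Multiset.map_univ_val_equiv]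
  rw [← hperm x σ, ← hperm y τ]
  exact congrArg (univ.val.map ·) h
end

section
/- Let Z_1,...,Z_m be n×n positive semidefinite matrices with eigenvalues r_{ik} ∈ [0,1), U unitary, and weights w_i > 0 summing to 1. Then ∏_{k=1}^n ∏_{i=1}^m ((1-r_{ik})/(1+r_{ik}))^{w_i} ≤ det(I - (Σ_i w_i Z_i)²)/|det(I - U Σ_i w_i Z_i)|². -/
/-!
Let `W = ∑ wᵢ Zᵢ` have eigenvalues `s_k` and orthonormal eigenvectors `u_k`, and put
`g t = log (1 + t) - log (1 - t)`, which is convex on `[0, 1)`. Since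
`s_k = ∑ᵢ wᵢ ⟪u_k, Zᵢ u_k⟫`, Jensen's inequality followed by Peierls' inequality
`∑_k g ⟪u_k, Z u_k⟫ ≤ ∑_l g (λ_l Z)` gives `∑_k g s_k ≤ ∑ᵢ wᵢ ∑_l g rᵢₗ`; exponentiating, the
left-hand side is at most `∏_k (1 - s_k) / (1 + s_k)`.

On the right, `det (1 - W²) = ∏_k (1 - s_k)(1 + s_k)`. In an eigenbasis of `W` the rows of
`1 - U W` become `e_k - s_k q_k` with unit vectors `q_k`, so Hadamard's inequality gives
`|det (1 - U W)| ≤ ∏_k (1 + s_k)`, and this determinant is nonzero because `‖U W‖ < 1`.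
-/

open Matrix BigOperators Finset RCLike
open scoped ComplexOrder InnerProductSpace

section TwoArtanh

open Real

noncomputable def twoArtanh (t : ℝ) : ℝ := log (1 + t) - log (1 - t)

theorem convexOn_twoArtanh : ConvexOn ℝ (Set.Ico 0 1) twoArtanh := by
  have hpos : ∀ x ∈ Set.Ioo (0 : ℝ) 1, 0 < 1 + x ∧ 0 < 1 - x := fun x hx => by
    constructor <;> linarith [hx.1, hx.2]
  refine convexOn_of_hasDerivWithinAt2_nonneg (convex_Ico 0 1)
    (f' := fun t => (1 + t)⁻¹ + (1 - t)⁻¹) (f'' := fun t => -((1 + t) ^ 2)⁻¹ + ((1 - t) ^ 2)⁻¹)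
    ?_ ?_ ?_ ?_ <;> try simp only [interior_Ico]
  · refine ContinuousOn.sub (ContinuousOn.log (by fun_prop) ?_) (ContinuousOn.log (by fun_prop) ?_)
      <;> intro x hx <;> linarith [hx.1, hx.2]
  · intro x hx
    obtain ⟨hp, hm⟩ := hpos x hx
    refine HasDerivAt.hasDerivWithinAt ?_
    convert ((hasDerivAt_id' x).const_add 1).log hp.ne' |>.sub
      (((hasDerivAt_id' x).const_sub 1).log hm.ne') using 1
    · rfl
    · ring
  · intro x hx
    obtain ⟨hp, hm⟩ := hpos x hx
    refine HasDerivAt.hasDerivWithinAt ?_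
    convert ((hasDerivAt_id' x).const_add 1).inv hp.ne' |>.add
      (((hasDerivAt_id' x).const_sub 1).inv hm.ne') using 1
    · rfl
    · ring
  · intro x hx
    have : (1 - x) ^ 2 ≤ (1 + x) ^ 2 := by nlinarith [hx.1]
    have := inv_anti₀ (by nlinarith [hx.2]) this
    linarith

theorem div_rpow_eq_exp_neg_twoArtanh {t : ℝ} (ht : t ∈ Set.Ioo (-1) 1) (w : ℝ) :
    ((1 - t) / (1 + t)) ^ w = exp (-(w * twoArtanh t)) := by
  have hp : 0 < 1 + t := by linarith [ht.1]
  have hm : 0 < 1 - t := by linarith [ht.2]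
  rw [rpow_def_of_pos (div_pos hm hp), log_div hm.ne' hp.ne', twoArtanh]
  ring_nf

theorem prod_prod_div_rpow_le_prod_div {ι m : Type*} [Fintype ι] [Fintype m] {r : m → ι → ℝ}
    {s : ι → ℝ} {w : m → ℝ} (hr : ∀ i k, r i k ∈ Set.Ioo (-1) 1)
    (hs : ∀ k, s k ∈ Set.Ioo (-1) 1)
    (h : ∑ k, twoArtanh (s k) ≤ ∑ i, w i * ∑ k, twoArtanh (r i k)) :
    ∏ k, ∏ i, ((1 - r i k) / (1 + r i k)) ^ w i ≤ ∏ k, (1 - s k) / (1 + s k) := by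
  have hr' : ∀ i k, ((1 - r i k) / (1 + r i k)) ^ w i = exp (-(w i * twoArtanh (r i k))) :=
    fun i k => div_rpow_eq_exp_neg_twoArtanh (hr i k) (w i)
  have hs' : ∀ k, (1 - s k) / (1 + s k) = exp (-(1 * twoArtanh (s k))) := fun k => by
    rw [← div_rpow_eq_exp_neg_twoArtanh (hs k), rpow_one]
  simp only [hr', hs', one_mul, ← exp_sum, exp_le_exp, sum_neg_distrib, neg_le_neg_iff]
  rw [sum_comm]
  simpa only [mul_sum] using h

end TwoArtanh

section Peierls

variable {𝕜 E ι κ : Type*} [RCLike 𝕜] [NormedAddCommGroup E] [InnerProductSpace 𝕜 E]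
  [Fintype ι] [Fintype κ] {T : E →ₗ[𝕜] E} {v : OrthonormalBasis κ 𝕜 E} {μ : κ → ℝ}

theorem re_inner_self_apply_eq_sum (hv : ∀ l, T (v l) = (μ l : 𝕜) • v l) (x : E) :
    re ⟪x, T x⟫_𝕜 = ∑ l, ‖⟪v l, x⟫_𝕜‖ ^ 2 * μ l := by
  have hTx : T x = ∑ l, (⟪v l, x⟫_𝕜 * μ l) • v l := by
    conv_lhs => rw [← v.sum_repr' x]
    simp only [map_sum, map_smul, hv, smul_smul]
  rw [hTx, inner_sum, map_sum]
  refine sum_congr rfl fun l _ => ?_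
  rw [inner_smul_right, ← inner_conj_symm x (v l), mul_right_comm, mul_conj, ← ofReal_pow,
    ← ofReal_mul, ofReal_re]

theorem re_inner_self_apply_mem {S : Set ℝ} (hS : Convex ℝ S)
    (hv : ∀ l, T (v l) = (μ l : 𝕜) • v l) (hμ : ∀ l, μ l ∈ S) {x : E} (hx : ‖x‖ = 1) :
    re ⟪x, T x⟫_𝕜 ∈ S := by
  rw [re_inner_self_apply_eq_sum hv]
  exact hS.sum_mem (fun l _ => by positivity) (by rw [v.sum_sq_norm_inner_right, hx, one_pow])
    fun l _ => hμ l

/-- **Peierls' inequality**. -/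
theorem sum_convexOn_re_inner_self_apply_le {S : Set ℝ} {f : ℝ → ℝ} (hf : ConvexOn ℝ S f)
    (hv : ∀ l, T (v l) = (μ l : 𝕜) • v l) (hμ : ∀ l, μ l ∈ S) (b : OrthonormalBasis ι 𝕜 E) :
    ∑ k, f (re ⟪b k, T (b k)⟫_𝕜) ≤ ∑ l, f (μ l) := calc
  ∑ k, f (re ⟪b k, T (b k)⟫_𝕜) ≤ ∑ k, ∑ l, ‖⟪v l, b k⟫_𝕜‖ ^ 2 * f (μ l) := by
    refine sum_le_sum fun k _ => ?_
    rw [re_inner_self_apply_eq_sum hv]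
    exact hf.map_sum_le (fun l _ => by positivity)
      (by rw [v.sum_sq_norm_inner_right, b.norm_eq_one, one_pow]) fun l _ => hμ l
  _ = ∑ l, f (μ l) := by
    rw [sum_comm]
    refine sum_congr rfl fun l _ => ?_
    rw [← sum_mul, b.sum_sq_norm_inner_left, v.norm_eq_one, one_pow, one_mul]

end Peierls

theorem Real.prod_le_one_of_sum_le_card {ι : Type*} (s : Finset ι) {x : ι → ℝ}
    (hx : ∀ i ∈ s, 0 ≤ x i) (h : ∑ i ∈ s, x i ≤ #s) : ∏ i ∈ s, x i ≤ 1 :=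
  calc ∏ i ∈ s, x i
      ≤ ∏ i ∈ s, Real.exp (x i - 1) :=
        prod_le_prod hx fun i _ => by linarith [Real.add_one_le_exp (x i - 1)]
    _ = Real.exp (∑ i ∈ s, x i - #s) := by simp [← Real.exp_sum, sum_sub_distrib]
    _ ≤ 1 := Real.exp_le_one_iff.2 (by linarith)

namespace Matrix

variable {𝕜 ι m : Type*} [RCLike 𝕜] [Fintype ι]

theorem mul_conjTranspose_apply_self (R : Matrix ι ι 𝕜) (k : ι) :
    (R * Rᴴ) k k = (‖(WithLp.toLp 2 (R k) : EuclideanSpace 𝕜 ι)‖ ^ 2 : ℝ) := by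
  rw [RCLike.ofReal_pow, ← inner_self_eq_norm_sq_to_K, EuclideanSpace.inner_eq_star_dotProduct,
    mul_apply, dotProduct]
  simp

variable [DecidableEq ι]

theorem norm_row_eq_one_of_mem_unitaryGroup {Q : Matrix ι ι 𝕜} (hQ : Q ∈ unitaryGroup ι 𝕜)
    (k : ι) : ‖(WithLp.toLp 2 (Q k) : EuclideanSpace 𝕜 ι)‖ = 1 := by
  have h := mul_conjTranspose_apply_self Q k
  rw [← star_eq_conjTranspose, mem_unitaryGroup_iff.mp hQ, one_apply_eq] at h
  exact (pow_eq_one_iff_of_nonneg (norm_nonneg _) two_ne_zero).mp (by exact_mod_cast h.symm)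

theorem norm_det_le_one_of_norm_row_eq_one {R : Matrix ι ι 𝕜}
    (hR : ∀ k, ‖(WithLp.toLp 2 (R k) : EuclideanSpace 𝕜 ι)‖ = 1) : ‖R.det‖ ≤ 1 := by
  have hG := posSemidef_self_mul_conjTranspose R
  have htrace : ∑ k, hG.1.eigenvalues k = Fintype.card ι := by
    have := hG.1.trace_eq_sum_eigenvalues
    simp [trace, mul_conjTranspose_apply_self, hR] at this
    exact_mod_cast this.symm
  have hdet : ‖R.det‖ ^ 2 = ∏ k, hG.1.eigenvalues k := by
    have hRR : (R * Rᴴ).det = (‖R.det‖ ^ 2 : ℝ) := by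
      rw [det_mul, det_conjTranspose, mul_comm, RCLike.star_def, RCLike.conj_mul]
      push_cast; rfl
    have := hG.1.det_eq_prod_eigenvalues
    rw [hRR] at this
    exact_mod_cast this
  have := Real.prod_le_one_of_sum_le_card univ (fun k _ => hG.eigenvalues_nonneg k) htrace.le
  nlinarith [norm_nonneg R.det]

/-- **Hadamard's inequality**. -/
theorem norm_det_le_prod_norm_row (R : Matrix ι ι 𝕜) :
    ‖R.det‖ ≤ ∏ k, ‖(WithLp.toLp 2 (R k) : EuclideanSpace 𝕜 ι)‖ := by
  set ρ : ι → ℝ := fun k => ‖(WithLp.toLp 2 (R k) : EuclideanSpace 𝕜 ι)‖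
  by_cases hzero : ∃ k, ρ k = 0
  · obtain ⟨k, hk⟩ := hzero
    have : R k = 0 := by simpa [ρ] using hk
    rw [det_eq_zero_of_row_eq_zero k fun j => by simp [this], norm_zero]
    exact prod_nonneg fun k _ => norm_nonneg _
  push Not at hzero
  set R' : Matrix ι ι 𝕜 := of fun k => ((ρ k)⁻¹ : 𝕜) • R k
  have hR : R = diagonal (fun k => (ρ k : 𝕜)) * R' := by
    ext k j
    simp [R', diagonal_mul, hzero k]
  have hR' : ∀ k, ‖(WithLp.toLp 2 (R' k) : EuclideanSpace 𝕜 ι)‖ = 1 := fun k => by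
    rw [show R' k = ((ρ k)⁻¹ : 𝕜) • R k from rfl, WithLp.toLp_smul, norm_smul, norm_inv,
      RCLike.norm_ofReal, abs_norm]
    exact inv_mul_cancel₀ (hzero k)
  calc ‖R.det‖ = (∏ k, ρ k) * ‖R'.det‖ := by
        conv_lhs => rw [hR]
        simp [det_mul, det_diagonal, norm_prod, ρ]
    _ ≤ ∏ k, ρ k := mul_le_of_le_one_right (prod_nonneg fun k _ => norm_nonneg _)
        (norm_det_le_one_of_norm_row_eq_one hR')

theorem norm_det_one_sub_diagonal_mul_le {d : ι → ℝ} (hd : ∀ k, 0 ≤ d k) {Q : Matrix ι ι 𝕜}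
    (hQ : Q ∈ unitaryGroup ι 𝕜) :
    ‖(1 - diagonal (fun k => (d k : 𝕜)) * Q).det‖ ≤ ∏ k, (1 + d k) := by
  refine (norm_det_le_prod_norm_row _).trans
    (prod_le_prod (fun _ _ => norm_nonneg _) fun k _ => ?_)
  have hrow : (1 - diagonal (fun k => (d k : 𝕜)) * Q) k = Pi.single k 1 - (d k : 𝕜) • Q k := by
    ext j
    simp [one_eq_pi_single, diagonal_mul, RCLike.real_smul_eq_coe_mul]
  rw [hrow, WithLp.toLp_sub, WithLp.toLp_smul, PiLp.toLp_single]
  calc _ ≤ ‖PiLp.single 2 k (1 : 𝕜)‖ + ‖(d k : 𝕜) • (WithLp.toLp 2 (Q k) : EuclideanSpace 𝕜 ι)‖ :=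
        norm_sub_le _ _
    _ = 1 + d k := by
        rw [PiLp.norm_single, norm_one, norm_smul, norm_row_eq_one_of_mem_unitaryGroup hQ,
          RCLike.norm_ofReal, abs_of_nonneg (hd k), mul_one]

open scoped Matrix.Norms.L2Operator in
theorem det_one_sub_diagonal_mul_ne_zero {d : ι → ℝ} (hd : ∀ k, |d k| < 1) {Q : Matrix ι ι 𝕜}
    (hQ : Q ∈ unitaryGroup ι 𝕜) : (1 - diagonal (fun k => (d k : 𝕜)) * Q).det ≠ 0 := by
  have hnorm : ‖diagonal (fun k => (d k : 𝕜)) * Q‖ < 1 := by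
    rw [CStarRing.norm_mul_mem_unitary _ hQ, l2_opNorm_diagonal, pi_norm_lt_iff zero_lt_one]
    simpa using hd
  exact ((isUnit_iff_isUnit_det _).mp (isUnit_one_sub_of_norm_lt_one hnorm)).ne_zero

namespace IsHermitian

theorem toEuclideanLin_eigenvectorBasis {A : Matrix ι ι 𝕜} (hA : A.IsHermitian) (j : ι) :
    toEuclideanLin A (hA.eigenvectorBasis j) = (hA.eigenvalues j : 𝕜) • hA.eigenvectorBasis j := by
  rw [toEuclideanLin, toLpLin_apply, hA.mulVec_eigenvectorBasis,
    RCLike.real_smul_eq_coe_smul (K := 𝕜)]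
  rfl

section WeightedSum

variable [Fintype m] {Z : m → Matrix ι ι 𝕜} {w : m → ℝ}

theorem eigenvalues_sum_smul_eq (hW : (∑ i, (w i : 𝕜) • Z i).IsHermitian) (k : ι) :
    hW.eigenvalues k = ∑ i, w i * re ⟪hW.eigenvectorBasis k,
      toEuclideanLin (Z i) (hW.eigenvectorBasis k)⟫_𝕜 := by
  have h := congrArg re (congrArg (inner 𝕜 (hW.eigenvectorBasis k))
    (hW.toEuclideanLin_eigenvectorBasis k))
  rw [inner_smul_right, inner_self_eq_norm_sq_to_K, hW.eigenvectorBasis.norm_eq_one] at h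
  simp only [map_sum, map_smul, LinearMap.coe_sum, Finset.sum_apply, LinearMap.smul_apply,
    inner_sum, inner_smul_right, re_ofReal_mul, mul_one, one_pow, ofReal_one, ofReal_re] at h
  exact h.symm

variable {S : Set ℝ} (hZ : ∀ i, (Z i).IsHermitian) (hZS : ∀ i l, (hZ i).eigenvalues l ∈ S)
  (hw0 : ∀ i, 0 ≤ w i) (hw1 : ∑ i, w i = 1) (hW : (∑ i, (w i : 𝕜) • Z i).IsHermitian)
include hZS hw0 hw1

theorem eigenvalues_sum_smul_mem (hS : Convex ℝ S) (k : ι) : hW.eigenvalues k ∈ S := by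
  rw [hW.eigenvalues_sum_smul_eq]
  exact hS.sum_mem (fun i _ => hw0 i) hw1 fun i _ => re_inner_self_apply_mem hS
    (hZ i).toEuclideanLin_eigenvectorBasis (hZS i) (hW.eigenvectorBasis.norm_eq_one k)

theorem sum_convexOn_eigenvalues_sum_smul_le {f : ℝ → ℝ} (hf : ConvexOn ℝ S f) :
    ∑ k, f (hW.eigenvalues k) ≤ ∑ i, w i * ∑ l, f ((hZ i).eigenvalues l) := by
  set a : m → ι → ℝ := fun i k =>
    re ⟪hW.eigenvectorBasis k, toEuclideanLin (Z i) (hW.eigenvectorBasis k)⟫_𝕜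
  calc ∑ k, f (hW.eigenvalues k) ≤ ∑ k, ∑ i, w i * f (a i k) := by
        refine sum_le_sum fun k _ => ?_
        rw [hW.eigenvalues_sum_smul_eq]
        exact hf.map_sum_le (fun i _ => hw0 i) hw1 fun i _ => re_inner_self_apply_mem hf.1
          (hZ i).toEuclideanLin_eigenvectorBasis (hZS i) (hW.eigenvectorBasis.norm_eq_one k)
    _ = ∑ i, w i * ∑ k, f (a i k) := by simp only [mul_sum]; exact sum_comm
    _ ≤ ∑ i, w i * ∑ l, f ((hZ i).eigenvalues l) :=
        sum_le_sum fun i _ => mul_le_mul_of_nonneg_left (sum_convexOn_re_inner_self_apply_le hf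
          (hZ i).toEuclideanLin_eigenvectorBasis (hZS i) hW.eigenvectorBasis) (hw0 i)

end WeightedSum

variable {A : Matrix ι ι 𝕜}

theorem det_one_sub_mul_eq (hA : A.IsHermitian) (B : Matrix ι ι 𝕜) :
    (1 - B * A).det = (1 - diagonal (fun k => (hA.eigenvalues k : 𝕜)) *
      (star (hA.eigenvectorUnitary : Matrix ι ι 𝕜) * B * hA.eigenvectorUnitary)).det := by
  set V : Matrix ι ι 𝕜 := (hA.eigenvectorUnitary : Matrix ι ι 𝕜)
  set D : Matrix ι ι 𝕜 := diagonal (fun k => (hA.eigenvalues k : 𝕜))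
  have hA' : A = V * D * star V := by
    conv_lhs => rw [hA.spectral_theorem, Unitary.conjStarAlgAut_apply]
    rfl
  conv_lhs => rw [hA']
  rw [← mul_assoc, ← mul_assoc, det_one_sub_mul_comm, ← mul_assoc, ← mul_assoc,
    det_one_sub_mul_comm, mul_assoc]

theorem det_one_sub_sq (hA : A.IsHermitian) :
    (1 - A ^ 2).det = ∏ k, (1 - (hA.eigenvalues k : 𝕜)) * (1 + (hA.eigenvalues k : 𝕜)) := by
  have hfac : 1 - A ^ 2 = (1 - 1 * A) * (1 - (-1) * A) := by noncomm_ring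
  rw [hfac, det_mul, det_one_sub_mul_eq hA, det_one_sub_mul_eq hA, prod_mul_distrib]
  simp only [mul_one, mul_neg, neg_mul, Unitary.star_mul_self_of_mem hA.eigenvectorUnitary.2,
    sub_neg_eq_add]
  rw [← diagonal_one, diagonal_sub, diagonal_add, det_diagonal, det_diagonal]

theorem prod_div_le_re_det_div_norm_sq (hA : A.IsHermitian)
    (hs : ∀ k, hA.eigenvalues k ∈ Set.Ico 0 1) {U : Matrix ι ι 𝕜} (hU : U ∈ unitaryGroup ι 𝕜) :
    ∏ k, (1 - hA.eigenvalues k) / (1 + hA.eigenvalues k)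
      ≤ re (1 - A ^ 2).det / ‖(1 - U * A).det‖ ^ 2 := by
  set s := hA.eigenvalues
  have hQ : star (hA.eigenvectorUnitary : Matrix ι ι 𝕜) * U * hA.eigenvectorUnitary
      ∈ unitaryGroup ι 𝕜 :=
    mul_mem (mul_mem (Unitary.star_mem hA.eigenvectorUnitary.2) hU) hA.eigenvectorUnitary.2
  have hnum : re (1 - A ^ 2).det = (∏ k, (1 - s k)) * ∏ k, (1 + s k) := by
    rw [det_one_sub_sq hA, ← prod_mul_distrib]
    exact_mod_cast ofReal_re (K := 𝕜) _
  have hden_pos : 0 < ‖(1 - U * A).det‖ := by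
    rw [det_one_sub_mul_eq hA, norm_pos_iff]
    exact det_one_sub_diagonal_mul_ne_zero
      (fun k => abs_lt.2 ⟨by linarith [(hs k).1], (hs k).2⟩) hQ
  have hden_le : ‖(1 - U * A).det‖ ≤ ∏ k, (1 + s k) := by
    rw [det_one_sub_mul_eq hA]
    exact norm_det_one_sub_diagonal_mul_le (fun k => (hs k).1) hQ
  have hP : 0 < ∏ k, (1 + s k) := prod_pos fun k _ => by linarith [(hs k).1]
  have hN : 0 ≤ (∏ k, (1 - s k)) * ∏ k, (1 + s k) :=
    mul_nonneg (prod_nonneg fun k _ => by linarith [(hs k).2]) hP.le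
  calc ∏ k, (1 - s k) / (1 + s k) = (∏ k, (1 - s k)) * (∏ k, (1 + s k)) / (∏ k, (1 + s k)) ^ 2 := by
        rw [prod_div_distrib]
        field_simp
    _ ≤ _ := by
        rw [hnum]
        gcongr

end IsHermitian

end Matrix

/-- Multi-matrix Harnack-type lower bound: for positive semidefinite `Z i` with eigenvalues
`r i k ∈ [0,1)`, unitary `U`, and weights `w i > 0` with `Σ w i = 1`,
`∏_k ∏_i ((1 - r i k)/(1 + r i k))^(w i) ≤ det(I - (Σ w i Z i)²)/|det(I - U Σ w i Z i)|²`. -/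
theorem multi_harnack_lower (n m : ℕ) (Z : Fin m → Matrix (Fin n) (Fin n) ℂ)
    (hZ : ∀ i, (Z i).PosSemidef)
    (r : Fin m → Fin n → ℝ) (hr : ∀ i k, r i k = (hZ i).1.eigenvalues k)
    (hr0 : ∀ i k, 0 ≤ r i k) (hr1 : ∀ i k, r i k < 1)
    (U : Matrix (Fin n) (Fin n) ℂ) (hU : U ∈ Matrix.unitaryGroup (Fin n) ℂ)
    (w : Fin m → ℝ) (hw : ∀ i, 0 < w i) (hw1 : ∑ i, w i = 1) :
    ∏ k, ∏ i, ((1 - r i k) / (1 + r i k)) ^ (w i)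
      ≤ ((1 - (∑ i, (w i : ℂ) • Z i) ^ 2).det).re
          / ‖(1 - U * ∑ i, (w i : ℂ) • Z i).det‖ ^ 2 := by
  have hW : (∑ i, (w i : ℂ) • Z i).IsHermitian :=
    isSelfAdjoint_sum _ fun i _ => (hZ i).1.smul (Complex.conj_ofReal (w i))
  have hrS : ∀ i k, (hZ i).1.eigenvalues k ∈ Set.Ico 0 1 := fun i k =>
    hr i k ▸ ⟨hr0 i k, hr1 i k⟩
  have hw0 : ∀ i, 0 ≤ w i := fun i => (hw i).le
  have hs := hW.eigenvalues_sum_smul_mem (fun i => (hZ i).1) hrS hw0 hw1 (convex_Ico 0 1)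
  have hJensen := hW.sum_convexOn_eigenvalues_sum_smul_le (fun i => (hZ i).1) hrS hw0 hw1
    convexOn_twoArtanh
  simp only [← hr] at hJensen
  have hIoo := Set.Ico_subset_Ioo_left (a₁ := (-1 : ℝ)) (b := 1) (by norm_num : (-1 : ℝ) < 0)
  calc ∏ k, ∏ i, ((1 - r i k) / (1 + r i k)) ^ (w i)
      ≤ ∏ k, (1 - hW.eigenvalues k) / (1 + hW.eigenvalues k) :=
        prod_prod_div_rpow_le_prod_div (fun i k => hIoo ⟨hr0 i k, hr1 i k⟩)
          (fun k => hIoo (hs k)) hJensen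
    _ ≤ _ := hW.prod_div_le_re_det_div_norm_sq hs hU
end

section
/- Let Z_1,...,Z_m be n×n positive semidefinite matrices with eigenvalues r_{ik}, k = 1,...,n, for Z_i, and let w_i > 0 with Σ w_i = 1. Let s_1 ≥ ... ≥ s_n be the eigenvalues of W = Σ_i w_i Z_i. If all r_{ik} ∈ [0,1), then ∏_{k=1}^n (1+s_k)/(1-s_k) ≤ ∏_{k=1}^n ∏_{i=1}^m ((1+r_{ik})/(1-r_{ik}))^{w_i}. -/
open Matrix BigOperators
open scoped ComplexOrder

/-!
Conjugating by the eigenvector unitary `U` of `W` diagonalises `W`, while the diagonal of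
`Uᴴ Zᵢ U` is `Dᵢ rᵢ` with `Dᵢ` the doubly stochastic matrix of squared moduli of the unitary
`Uᴴ Vᵢ` (Schur). Hence `s = ∑ᵢ wᵢ Dᵢ rᵢ`. Since `(1 + x) / (1 - x) = exp (2 artanh x)` and
`artanh` is convex on `[0, 1)`, Jensen's inequality, applied first to the weights `w` and then
to each `Dᵢ`, gives `∑ₖ artanh sₖ ≤ ∑ᵢ wᵢ ∑ₖ artanh rᵢₖ`.
-/

open Finset Real

lemma Real.hasDerivAt_artanh {x : ℝ} (hx : x ∈ Set.Ioo (-1) 1) :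
    HasDerivAt artanh (1 - x ^ 2)⁻¹ x := by
  have h1 : 0 < 1 + x := by linarith [hx.1]
  have h2 : 0 < 1 - x := by linarith [hx.2]
  have hlog := ((((hasDerivAt_id' x).const_add 1).log h1.ne').sub
    (((hasDerivAt_id' x).const_sub 1).log h2.ne')).const_mul (1 / 2 : ℝ)
  have heq : artanh =ᶠ[nhds x] fun y => 1 / 2 * (log (1 + y) - log (1 - y)) := by
    filter_upwards [Ioo_mem_nhds hx.1 hx.2] with y hy
    rw [artanh_eq_half_log (Set.Ioo_subset_Icc_self hy),
      log_div (by linarith [hy.1]) (by linarith [hy.2])]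
  refine (hlog.congr_of_eventuallyEq heq).congr_deriv ?_
  rw [show 1 - x ^ 2 = (1 + x) * (1 - x) by ring]
  field_simp
  ring

lemma Real.convexOn_artanh : ConvexOn ℝ (Set.Ico 0 1) artanh := by
  have hderiv {x : ℝ} (hx₀ : 0 ≤ x) (hx₁ : x < 1) : HasDerivAt artanh (1 - x ^ 2)⁻¹ x :=
    hasDerivAt_artanh ⟨by linarith, hx₁⟩
  refine MonotoneOn.convexOn_of_deriv (convex_Ico 0 1)
    (fun x hx => (hderiv hx.1 hx.2).continuousAt.continuousWithinAt) ?_ ?_ <;> rw [interior_Ico]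
  · exact fun x hx => (hderiv hx.1.le hx.2).differentiableAt.differentiableWithinAt
  · intro x hx y hy hxy
    rw [(hderiv hx.1.le hx.2).deriv, (hderiv hy.1.le hy.2).deriv]
    have : 0 < 1 - y ^ 2 := by nlinarith [hy.1, hy.2]
    gcongr
    exact hx.1.le

lemma Real.exp_two_mul_artanh {x : ℝ} (hx : x ∈ Set.Ioo (-1) 1) :
    exp (2 * artanh x) = (1 + x) / (1 - x) := by
  rw [two_mul, exp_add, exp_artanh hx,
    mul_self_sqrt (div_nonneg (by linarith [hx.1]) (by linarith [hx.2]))]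

section Stochastic

variable {𝕜 n : Type*} [Field 𝕜] [LinearOrder 𝕜] [IsStrictOrderedRing 𝕜] [Fintype n]
  [DecidableEq n] {s : Set 𝕜} {M : Matrix n n 𝕜} {x : n → 𝕜}

lemma Convex.mulVec_apply_mem (hs : Convex 𝕜 s) (hM : M ∈ rowStochastic 𝕜 n)
    (hx : ∀ l, x l ∈ s) (k : n) : (M *ᵥ x) k ∈ s :=
  hs.sum_mem (fun _ _ => nonneg_of_mem_rowStochastic hM)
    (sum_row_of_mem_rowStochastic hM k) fun l _ => hx l

lemma ConvexOn.sum_map_mulVec_le {β : Type*} [AddCommGroup β] [PartialOrder β]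
    [IsOrderedAddMonoid β] [Module 𝕜 β] [IsStrictOrderedModule 𝕜 β] {f : 𝕜 → β}
    (hf : ConvexOn 𝕜 s f) (hM : M ∈ doublyStochastic 𝕜 n) (hx : ∀ l, x l ∈ s) :
    ∑ k, f ((M *ᵥ x) k) ≤ ∑ k, f (x k) :=
  calc ∑ k, f ((M *ᵥ x) k) ≤ ∑ k, ∑ l, M k l • f (x l) :=
        sum_le_sum fun k _ => hf.map_sum_le (fun _ _ => nonneg_of_mem_doublyStochastic hM)
          (sum_row_of_mem_doublyStochastic hM k) fun l _ => hx l
    _ = ∑ l, (∑ k, M k l) • f (x l) := by simp only [sum_smul]; exact sum_comm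
    _ = ∑ k, f (x k) := by simp only [sum_col_of_mem_doublyStochastic hM, one_smul]

lemma ConvexOn.sum_map_sum_mul_mulVec_le {ι β : Type*} [Fintype ι] [AddCommGroup β]
    [PartialOrder β] [IsOrderedAddMonoid β] [Module 𝕜 β] [IsStrictOrderedModule 𝕜 β]
    {f : 𝕜 → β} (hf : ConvexOn 𝕜 s f) {w : ι → 𝕜} (hw0 : ∀ i, 0 ≤ w i) (hw1 : ∑ i, w i = 1)
    {D : ι → Matrix n n 𝕜} (hD : ∀ i, D i ∈ doublyStochastic 𝕜 n) {x : ι → n → 𝕜}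
    (hx : ∀ i l, x i l ∈ s) :
    ∑ k, f (∑ i, w i * (D i *ᵥ x i) k) ≤ ∑ i, w i • ∑ k, f (x i k) :=
  have hrow i := (mem_doublyStochastic_iff_mem_rowStochastic_and_mem_colStochastic.mp (hD i)).1
  calc ∑ k, f (∑ i, w i * (D i *ᵥ x i) k) ≤ ∑ k, ∑ i, w i • f ((D i *ᵥ x i) k) :=
        sum_le_sum fun k _ => hf.map_sum_le (fun i _ => hw0 i) hw1
          fun i _ => hf.1.mulVec_apply_mem (hrow i) (hx i) k
    _ = ∑ i, w i • ∑ k, f ((D i *ᵥ x i) k) := by rw [sum_comm]; simp only [smul_sum]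
    _ ≤ ∑ i, w i • ∑ k, f (x i k) :=
        sum_le_sum fun i _ =>
          smul_le_smul_of_nonneg_left (hf.sum_map_mulVec_le (hD i) (hx i)) (hw0 i)

end Stochastic

namespace Matrix

variable {𝕜 n : Type*} [RCLike 𝕜] [Fintype n] [DecidableEq n]

lemma mul_diagonal_mul_star_apply_self (N : Matrix n n 𝕜) (d : n → ℝ) (k : n) :
    (N * diagonal (fun l => (d l : 𝕜)) * star N) k k = ((∑ l, ‖N k l‖ ^ 2 * d l : ℝ) : 𝕜) := by
  push_cast
  rw [mul_apply]
  refine sum_congr rfl fun l _ => ?_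
  rw [mul_diagonal, star_apply, RCLike.star_def, mul_right_comm, RCLike.mul_conj]

lemma map_norm_sq_mem_doublyStochastic {U : Matrix n n 𝕜} (hU : U ∈ unitaryGroup n 𝕜) :
    U.map (fun z => ‖z‖ ^ 2) ∈ doublyStochastic ℝ n := by
  have hsum : ∀ (N : Matrix n n 𝕜), N * star N = 1 → ∀ k, ∑ l, ‖N k l‖ ^ 2 = 1 := by
    intro N hN k
    have h := mul_diagonal_mul_star_apply_self N 1 k
    simp only [Pi.one_apply, RCLike.ofReal_one, mul_one, diagonal_one, hN, one_apply_eq] at h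
    exact_mod_cast h.symm
  refine mem_doublyStochastic_iff_sum.mpr ⟨fun _ _ => sq_nonneg _,
    hsum U (mem_unitaryGroup_iff.mp hU), fun l => ?_⟩
  simpa [star_apply] using hsum (star U) (by rw [star_star]; exact mem_unitaryGroup_iff'.mp hU) l

lemma IsHermitian.exists_mem_doublyStochastic_diag_conj {A : Matrix n n 𝕜} (hA : A.IsHermitian)
    {U : Matrix n n 𝕜} (hU : U ∈ unitaryGroup n 𝕜) :
    ∃ D ∈ doublyStochastic ℝ n, ∀ k, (star U * A * U) k k = ((D *ᵥ hA.eigenvalues) k : 𝕜) := by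
  set N := star U * (hA.eigenvectorUnitary : Matrix n n 𝕜)
  have hN : N ∈ unitaryGroup n 𝕜 := mul_mem (Unitary.star_mem hU) hA.eigenvectorUnitary.2
  refine ⟨_, map_norm_sq_mem_doublyStochastic hN, fun k => ?_⟩
  have hconj : star U * A * U = N * diagonal (fun l => (hA.eigenvalues l : 𝕜)) * star N := by
    conv_lhs => rw [hA.spectral_theorem, Unitary.conjStarAlgAut_apply]
    simp only [N, star_mul, star_star, Matrix.mul_assoc]
    rfl
  rw [hconj, mul_diagonal_mul_star_apply_self]
  rfl

lemma IsHermitian.star_eigenvectorUnitary_mul_mul_apply_self {A : Matrix n n 𝕜}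
    (hA : A.IsHermitian) (k : n) :
    (star (hA.eigenvectorUnitary : Matrix n n 𝕜) * A * hA.eigenvectorUnitary) k k =
      hA.eigenvalues k := by
  have h := congrFun₂ hA.conjStarAlgAut_star_eigenvectorUnitary k k
  rwa [Unitary.conjStarAlgAut_star_apply, diagonal_apply_eq] at h

lemma IsHermitian.exists_eigenvalues_sum_smul_eq {ι : Type*} [Fintype ι]
    {A : ι → Matrix n n 𝕜} (hA : ∀ i, (A i).IsHermitian) (w : ι → ℝ)
    (hW : (∑ i, (w i : 𝕜) • A i).IsHermitian) :
    ∃ D : ι → Matrix n n ℝ, (∀ i, D i ∈ doublyStochastic ℝ n) ∧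
      ∀ k, hW.eigenvalues k = ∑ i, w i * (D i *ᵥ (hA i).eigenvalues) k := by
  choose D hD hdiag using fun i =>
    (hA i).exists_mem_doublyStochastic_diag_conj hW.eigenvectorUnitary.2
  refine ⟨D, hD, fun k => ?_⟩
  have h := hW.star_eigenvectorUnitary_mul_mul_apply_self k
  simp only [Finset.mul_sum, Finset.sum_mul, Matrix.mul_smul, Matrix.smul_mul, sum_apply,
    smul_apply, hdiag, smul_eq_mul] at h
  rw [← RCLike.ofReal_inj (K := 𝕜), ← h]
  push_cast
  rfl

end Matrix

/-- For positive semidefinite `Z i` with eigenvalues `r i k ∈ [0,1)`, weights `w i > 0`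
summing to `1`, and `s` the eigenvalues of `W = Σ w i Z i`,
`∏ (1 + s k)/(1 - s k) ≤ ∏_k ∏_i ((1 + r i k)/(1 - r i k))^(w i)`. -/
theorem eigenvalue_harnack_sum (n m : ℕ) (Z : Fin m → Matrix (Fin n) (Fin n) ℂ)
    (hZ : ∀ i, (Z i).PosSemidef)
    (r : Fin m → Fin n → ℝ) (hr : ∀ i k, r i k = (hZ i).1.eigenvalues k)
    (hr0 : ∀ i k, 0 ≤ r i k) (hr1 : ∀ i k, r i k < 1)
    (w : Fin m → ℝ) (hw : ∀ i, 0 < w i) (hw1 : ∑ i, w i = 1)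
    (hW : (∑ i, (w i : ℂ) • Z i).IsHermitian)
    (s : Fin n → ℝ) (hs : ∀ k, s k = hW.eigenvalues k) :
    ∏ k, (1 + s k) / (1 - s k)
      ≤ ∏ k, ∏ i, ((1 + r i k) / (1 - r i k)) ^ (w i) := by
  obtain ⟨D, hD, hD_eig⟩ := IsHermitian.exists_eigenvalues_sum_smul_eq (fun i => (hZ i).1) w hW
  have hs_eq : ∀ k, s k = ∑ i, w i * (D i *ᵥ r i) k := fun k => by
    simp only [hs, hD_eig, show r = fun i => (hZ i).1.eigenvalues from funext₂ hr]
  have hr_mem : ∀ i k, r i k ∈ Set.Ico 0 1 := fun i k => ⟨hr0 i k, hr1 i k⟩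
  have hs_mem : ∀ k, s k ∈ Set.Ico 0 1 := fun k => hs_eq k ▸ (convex_Ico 0 1).sum_mem
    (fun i _ => (hw i).le) hw1 fun i _ => (convex_Ico 0 1).mulVec_apply_mem
      (mem_doublyStochastic_iff_mem_rowStochastic_and_mem_colStochastic.mp (hD i)).1 (hr_mem i) k
  have hIoo : Set.Ico (0 : ℝ) 1 ⊆ Set.Ioo (-1) 1 := Set.Ico_subset_Ioo_left (by norm_num)
  have key := convexOn_artanh.sum_map_sum_mul_mulVec_le (fun i => (hw i).le) hw1 hD hr_mem
  calc ∏ k, (1 + s k) / (1 - s k) = exp (2 * ∑ k, artanh (s k)) := by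
        rw [mul_sum, exp_sum]
        exact prod_congr rfl fun k _ => (exp_two_mul_artanh (hIoo (hs_mem k))).symm
    _ ≤ exp (2 * ∑ i, w i * ∑ k, artanh (r i k)) := by
        gcongr
        simpa only [hs_eq, smul_eq_mul] using key
    _ = exp (∑ k, ∑ i, 2 * artanh (r i k) * w i) := by
        simp only [mul_sum]
        rw [sum_comm]
        exact congrArg exp (sum_congr rfl fun k _ => sum_congr rfl fun i _ => by ring)
    _ = ∏ k, ∏ i, ((1 + r i k) / (1 - r i k)) ^ (w i) := by
        simp only [exp_sum, exp_mul, exp_two_mul_artanh (hIoo (hr_mem _ _))]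
end
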